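/- Variational representation of implied volatility: for all k ∈ ℝ and (1-e^k)^+ ≤ c < 1, Y_BS(k,c) = inf over d₂ ∈ ℝ of [Φ^{-1}(c + e^k·Φ(d₂)) - d₂], with the convention Φ^{-1}(u) = +∞ for u ≥ 1. Moreover if c > (1-e^k)^+, the infimum is attained at d₂* = -k/y - y/2 where y = Y_BS(k,c). -/

import Mathlib

open MeasureTheory Real Filter Asymptotics Set

/-- Standard normal density. -/
noncomputable def phi (z : ℝ) : ℝ := (Real.sqrt (2 * Real.pi))⁻¹ * Real.exp (-z ^ 2 / 2)

/-- Standard normal CDF. -/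
noncomputable def Phi (x : ℝ) : ℝ := ∫ z in Set.Iic x, phi z

/-- Black–Scholes normalized call price. -/
noncomputable def CBS (k y : ℝ) : ℝ :=
  if 0 < y then Phi (-k / y + y / 2) - Real.exp k * Phi (-k / y - y / 2)
  else max (1 - Real.exp k) 0

/-- Implied total standard deviation: inverse of `CBS k` on `[0,∞)`. -/
noncomputable def YBS (k c : ℝ) : ℝ := sInf {y : ℝ | 0 ≤ y ∧ CBS k y = c}

/-- Inverse of the standard normal CDF on (0,1). -/
noncomputable def PhiInv (u : ℝ) : ℝ := sInf {x : ℝ | u ≤ Phi x}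

/-- Extended-real quantile with the convention `Φ⁻¹(u) = +∞` for `u ≥ 1`, `-∞` for `u ≤ 0`. -/
noncomputable def PhiInvE (u : ℝ) : EReal :=
  if 1 ≤ u then ⊤ else if u ≤ 0 then ⊥ else ((PhiInv u : ℝ) : EReal)

open scoped Topology

/-! For `y > 0` the function `d ↦ Φ(d + y) - e^k Φ(d)` has derivative
`φ(d) (e^{-dy - y²/2} - e^k)`, so it is maximal at `d₂ = -k/y - y/2`, where its value is
`C_BS(k, y)`. Taking `y = Y_BS(k, c)` this says `Φ(d + y) ≤ c + e^k Φ(d)`, i.e.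
`y ≤ Φ⁻¹(c + e^k Φ(d)) - d` for every `d`, with equality at `d = d₂`. In the boundary case
`y = 0` the infimum is not attained; it is approached by evaluating at `d₂(y')` for `y' ↓ 0`,
which is possible because `C_BS(k, ·)` is increasing. -/

lemma phi_eq_gaussianPDFReal : phi = ProbabilityTheory.gaussianPDFReal 0 1 := by
  ext z
  simp [phi, ProbabilityTheory.gaussianPDFReal]

lemma phi_pos (z : ℝ) : 0 < phi z := by
  unfold phi
  positivity

lemma phi_le_one (z : ℝ) : phi z ≤ 1 := by
  have h_sqrt : 1 ≤ √(2 * π) := Real.one_le_sqrt.2 (by linarith [pi_gt_three])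
  have h_exp : exp (-z ^ 2 / 2) ≤ 1 := exp_le_one_iff.2 (by nlinarith [sq_nonneg z])
  exact mul_le_one₀ (inv_le_one_of_one_le₀ h_sqrt) (exp_pos _).le h_exp

lemma continuous_phi : Continuous phi := by
  unfold phi
  fun_prop

lemma integrable_phi : Integrable phi :=
  phi_eq_gaussianPDFReal ▸ ProbabilityTheory.integrable_gaussianPDFReal 0 1

lemma integral_phi : ∫ z, phi z = 1 :=
  phi_eq_gaussianPDFReal ▸ ProbabilityTheory.integral_gaussianPDFReal_eq_one 0 one_ne_zero

lemma Phi_sub_Phi (a b : ℝ) : Phi b - Phi a = ∫ t in a..b, phi t :=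
  intervalIntegral.integral_Iic_sub_Iic integrable_phi.integrableOn integrable_phi.integrableOn

lemma hasDerivAt_Phi (x : ℝ) : HasDerivAt Phi (phi x) x := by
  have hPhi : (fun t => Phi 0 + ∫ s in (0 : ℝ)..t, phi s) = Phi := by
    ext t
    rw [← Phi_sub_Phi]
    ring
  rw [← hPhi]
  exact (intervalIntegral.integral_hasDerivAt_right (continuous_phi.intervalIntegrable _ _)
    (continuous_phi.stronglyMeasurableAtFilter _ _) continuous_phi.continuousAt).const_add _

@[fun_prop]
lemma continuous_Phi : Continuous Phi :=
  continuous_iff_continuousAt.2 fun x => (hasDerivAt_Phi x).continuousAt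

lemma strictMono_Phi : StrictMono Phi :=
  strictMono_of_hasDerivAt_pos hasDerivAt_Phi phi_pos

lemma Phi_sub_Phi_le {a b : ℝ} (hab : a ≤ b) : Phi b - Phi a ≤ b - a := by
  have hmono : Monotone fun t => t - Phi t :=
    monotone_of_hasDerivAt_nonneg (fun t => (hasDerivAt_id t).sub (hasDerivAt_Phi t))
      fun t => sub_nonneg.2 (phi_le_one t)
  linarith [hmono hab]

lemma tendsto_Phi_atTop : Tendsto Phi atTop (𝓝 1) :=
  integral_phi ▸ (aecover_Iic tendsto_id).integral_tendsto_of_countably_generated integrable_phi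

lemma Phi_add_integral_Ioi (x : ℝ) : Phi x + ∫ z in Ioi x, phi z = 1 := by
  rw [Phi, intervalIntegral.integral_Iic_add_Ioi integrable_phi.integrableOn
    integrable_phi.integrableOn, integral_phi]

lemma tendsto_Phi_atBot : Tendsto Phi atBot (𝓝 0) := by
  have h_tail : Tendsto (fun x => ∫ z in Ioi x, phi z) atBot (𝓝 1) :=
    integral_phi ▸ (aecover_Ioi tendsto_id).integral_tendsto_of_countably_generated integrable_phi
  have h := tendsto_const_nhds (x := (1 : ℝ)).sub h_tail
  rw [sub_self] at h
  exact h.congr fun x => by linarith [Phi_add_integral_Ioi x]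

lemma Phi_pos (x : ℝ) : 0 < Phi x :=
  (strictMono_Phi.monotone.le_of_tendsto tendsto_Phi_atBot (x - 1)).trans_lt
    (strictMono_Phi (sub_one_lt x))

lemma Phi_lt_one (x : ℝ) : Phi x < 1 :=
  (strictMono_Phi (lt_add_one x)).trans_le
    (strictMono_Phi.monotone.ge_of_tendsto tendsto_Phi_atTop _)

lemma exists_Phi_eq {u : ℝ} (h0 : 0 < u) (h1 : u < 1) : ∃ x, Phi x = u := by
  obtain ⟨a, ha⟩ := (tendsto_Phi_atBot.eventually_lt_const h0).exists
  obtain ⟨b, hb⟩ := (tendsto_Phi_atTop.eventually_const_lt h1).exists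
  obtain ⟨x, -, hx⟩ := intermediate_value_Icc (strictMono_Phi.lt_iff_lt.1 (ha.trans hb)).le
    continuous_Phi.continuousOn ⟨ha.le, hb.le⟩
  exact ⟨x, hx⟩

lemma PhiInv_Phi (x : ℝ) : PhiInv (Phi x) = x := by
  have hset : {t : ℝ | Phi x ≤ Phi t} = Ici x := by
    ext t
    exact strictMono_Phi.le_iff_le
  rw [PhiInv, hset, csInf_Ici]

lemma PhiInvE_Phi (x : ℝ) : PhiInvE (Phi x) = x := by
  rw [PhiInvE, if_neg (Phi_lt_one x).not_ge, if_neg (Phi_pos x).not_ge, PhiInv_Phi]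

lemma coe_le_PhiInvE {x u : ℝ} (hu : 0 < u) (h : Phi x ≤ u) : (x : EReal) ≤ PhiInvE u := by
  by_cases hu1 : 1 ≤ u
  · rw [PhiInvE, if_pos hu1]
    exact le_top
  obtain ⟨z, rfl⟩ := exists_Phi_eq hu (not_le.1 hu1)
  rw [PhiInvE_Phi, EReal.coe_le_coe_iff]
  exact strictMono_Phi.le_iff_le.1 h

lemma PhiInvE_le_coe {x u : ℝ} (hu : 0 < u) (h : u ≤ Phi x) : PhiInvE u ≤ x := by
  obtain ⟨z, rfl⟩ := exists_Phi_eq hu (h.trans_lt (Phi_lt_one x))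
  rw [PhiInvE_Phi, EReal.coe_le_coe_iff]
  exact strictMono_Phi.le_iff_le.1 h

lemma CBS_zero (k : ℝ) : CBS k 0 = max (1 - exp k) 0 := by
  rw [CBS, if_neg (lt_irrefl 0)]

lemma CBS_of_pos {k y : ℝ} (hy : 0 < y) :
    CBS k y = Phi (-k / y - y / 2 + y) - exp k * Phi (-k / y - y / 2) := by
  rw [CBS, if_pos hy]
  ring_nf

lemma one_sub_exp_mul_Phi_le (k d : ℝ) : (1 - exp k) * Phi d ≤ max (1 - exp k) 0 := by
  have h0 := Phi_pos d
  have h1 := Phi_lt_one d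
  rcases le_total 0 (1 - exp k) with hk | hk
  · exact (mul_le_of_le_one_right hk h1.le).trans (le_max_left _ _)
  · exact (mul_nonpos_of_nonpos_of_nonneg hk h0.le).trans (le_max_right _ _)

lemma phi_add (d y : ℝ) : phi (d + y) = phi d * exp (-d * y - y ^ 2 / 2) := by
  rw [phi, phi, mul_assoc, ← exp_add]
  ring_nf

lemma hasDerivAt_Phi_add_sub (k y d : ℝ) :
    HasDerivAt (fun t => Phi (t + y) - exp k * Phi t)
      (phi d * (exp (-d * y - y ^ 2 / 2) - exp k)) d := by
  have h_shift : HasDerivAt (fun t => Phi (t + y)) (phi (d + y)) d :=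
    (hasDerivAt_Phi (d + y)).comp_add_const d y
  refine (h_shift.sub ((hasDerivAt_Phi d).const_mul (exp k))).congr_deriv ?_
  rw [phi_add]
  ring

lemma Phi_add_sub_le_CBS (k : ℝ) {y : ℝ} (hy : 0 ≤ y) (d : ℝ) :
    Phi (d + y) - exp k * Phi d ≤ CBS k y := by
  rcases hy.eq_or_lt with rfl | hy
  · rw [CBS_zero, add_zero, ← one_sub_mul]
    exact one_sub_exp_mul_Phi_le k d
  set s := -k / y - y / 2
  have hs : s * y = -k - y ^ 2 / 2 := by simp only [s]; field_simp
  have hcont : Continuous fun t => Phi (t + y) - exp k * Phi t := by fun_prop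
  rw [CBS_of_pos hy]
  rcases le_total d s with hd | hd
  · refine monotoneOn_of_hasDerivWithinAt_nonneg (convex_Iic s) hcont.continuousOn
      (fun t _ => (hasDerivAt_Phi_add_sub k y t).hasDerivWithinAt) (fun t ht => ?_)
      hd self_mem_Iic hd
    rw [interior_Iic] at ht
    refine mul_nonneg (phi_pos t).le (sub_nonneg.2 (exp_le_exp.2 ?_))
    nlinarith [mul_le_mul_of_nonneg_right ht.le hy.le]
  · refine antitoneOn_of_hasDerivWithinAt_nonpos (convex_Ici s) hcont.continuousOn
      (fun t _ => (hasDerivAt_Phi_add_sub k y t).hasDerivWithinAt) (fun t ht => ?_)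
      self_mem_Ici hd hd
    rw [interior_Ici] at ht
    refine mul_nonpos_of_nonneg_of_nonpos (phi_pos t).le (sub_nonpos.2 (exp_le_exp.2 ?_))
    nlinarith [mul_le_mul_of_nonneg_right ht.le hy.le]

lemma max_le_CBS (k : ℝ) {y : ℝ} (hy : 0 ≤ y) : max (1 - exp k) 0 ≤ CBS k y := by
  have h_bot : Tendsto (fun d => Phi (d + y) - exp k * Phi d) atBot (𝓝 (0 - exp k * 0)) :=
    (tendsto_Phi_atBot.comp (tendsto_atBot_add_const_right _ y tendsto_id)).sub
      (tendsto_Phi_atBot.const_mul _)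
  have h_top : Tendsto (fun d => Phi (d + y) - exp k * Phi d) atTop (𝓝 (1 - exp k * 1)) :=
    (tendsto_Phi_atTop.comp (tendsto_atTop_add_const_right _ y tendsto_id)).sub
      (tendsto_Phi_atTop.const_mul _)
  rw [mul_zero, sub_zero] at h_bot
  rw [mul_one] at h_top
  exact max_le (le_of_tendsto' h_top (Phi_add_sub_le_CBS k hy))
    (le_of_tendsto' h_bot (Phi_add_sub_le_CBS k hy))

lemma CBS_le_max_add (k : ℝ) {y : ℝ} (hy : 0 ≤ y) : CBS k y ≤ max (1 - exp k) 0 + y := by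
  rcases hy.eq_or_lt with rfl | hy
  · rw [CBS_zero, add_zero]
  rw [CBS_of_pos hy]
  have h_incr := Phi_sub_Phi_le (le_add_of_nonneg_right hy.le : -k / y - y / 2 ≤ _)
  linarith [one_sub_exp_mul_Phi_le k (-k / y - y / 2)]

lemma CBS_lt_CBS {k a b : ℝ} (ha : 0 < a) (hab : a < b) : CBS k a < CBS k b := by
  rw [CBS_of_pos ha]
  have h_gain := strictMono_Phi (by linarith : -k / a - a / 2 + a < -k / a - a / 2 + b)
  linarith [Phi_add_sub_le_CBS k (ha.trans hab).le (-k / a - a / 2)]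

lemma strictMonoOn_CBS (k : ℝ) : StrictMonoOn (CBS k) (Ici 0) := by
  intro a ha b _ hab
  rcases (mem_Ici.1 ha).eq_or_lt with rfl | ha
  · have hb : 0 < b := hab
    calc CBS k 0 = max (1 - exp k) 0 := CBS_zero k
      _ ≤ CBS k (b / 2) := max_le_CBS k (by positivity)
      _ < CBS k b := CBS_lt_CBS (by positivity) (by linarith)
  · exact CBS_lt_CBS ha hab

lemma continuousOn_CBS (k : ℝ) : ContinuousOn (CBS k) (Ioi 0) := by
  have h_inv : ContinuousOn (fun y => -k / y) (Ioi 0) :=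
    continuousOn_const.div continuousOn_id fun y hy => (mem_Ioi.1 hy).ne'
  have h : ContinuousOn (fun y => Phi (-k / y + y / 2) - exp k * Phi (-k / y - y / 2))
      (Ioi 0) := by fun_prop
  exact h.congr fun y hy => by rw [CBS, if_pos (mem_Ioi.1 hy)]

lemma exists_lt_CBS (k : ℝ) {c : ℝ} (hc : c < 1) : ∃ T, 0 < T ∧ c < CBS k T := by
  have h_half : Tendsto (fun T : ℝ => T / 2) atTop atTop := tendsto_id.atTop_div_const two_pos
  have h_lim :
      Tendsto (fun T => Phi (T / 2) - exp k * Phi (-(T / 2))) atTop (𝓝 (1 - exp k * 0)) :=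
    (tendsto_Phi_atTop.comp h_half).sub
      ((tendsto_Phi_atBot.comp (tendsto_neg_atTop_atBot.comp h_half)).const_mul _)
  rw [mul_zero, sub_zero] at h_lim
  obtain ⟨T, hcT, hT⟩ := ((h_lim.eventually_const_lt hc).and (eventually_gt_atTop 0)).exists
  refine ⟨T, hT, hcT.trans_le ?_⟩
  have h := Phi_add_sub_le_CBS k hT.le (-(T / 2))
  rwa [show -(T / 2) + T = T / 2 by ring] at h

lemma exists_CBS_eq {k c : ℝ} (hc : max (1 - exp k) 0 ≤ c) (hc1 : c < 1) :
    ∃ y, 0 ≤ y ∧ CBS k y = c := by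
  rcases hc.eq_or_lt with rfl | hc
  · exact ⟨0, le_rfl, CBS_zero k⟩
  set t := (c - max (1 - exp k) 0) / 2 with ht_def
  have ht : 0 < t := by linarith
  have htc : CBS k t < c := by linarith [CBS_le_max_add k ht.le]
  obtain ⟨T, hT, hTc⟩ := exists_lt_CBS k hc1
  have htT : t ≤ T := ((strictMonoOn_CBS k).le_iff_le ht.le hT.le).1 (htc.trans hTc).le
  obtain ⟨y, hy, hyc⟩ := intermediate_value_Icc htT
    ((continuousOn_CBS k).mono fun z hz => ht.trans_le hz.1) ⟨htc.le, hTc.le⟩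
  exact ⟨y, ht.le.trans hy.1, hyc⟩

lemma YBS_eq_of_CBS_eq {k c y : ℝ} (hy : 0 ≤ y) (hyc : CBS k y = c) : YBS k c = y := by
  have hset : {z : ℝ | 0 ≤ z ∧ CBS k z = c} = {y} := by
    ext z
    refine ⟨fun ⟨hz, hzc⟩ => (strictMonoOn_CBS k).injOn hz hy (hzc.trans hyc.symm), ?_⟩
    rintro rfl
    exact ⟨hy, hyc⟩
  rw [YBS, hset, csInf_singleton]

lemma coe_le_PhiInvE_CBS_add_sub {k y : ℝ} (hy : 0 ≤ y) (d : ℝ) :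
    (y : EReal) ≤ PhiInvE (CBS k y + exp k * Phi d) - d := by
  have hu : 0 < CBS k y + exp k * Phi d :=
    add_pos_of_nonneg_of_pos ((le_max_right _ _).trans (max_le_CBS k hy))
      (mul_pos (exp_pos k) (Phi_pos d))
  rw [EReal.le_sub_iff_add_le (.inl (EReal.coe_ne_bot d)) (.inl (EReal.coe_ne_top d)),
    ← EReal.coe_add, add_comm]
  exact coe_le_PhiInvE hu (by linarith [Phi_add_sub_le_CBS k hy d])

lemma PhiInvE_add_sub_le {k c y : ℝ} (hy : 0 < y) (hc0 : 0 ≤ c) (hc : c ≤ CBS k y) :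
    PhiInvE (c + exp k * Phi (-k / y - y / 2)) - ((-k / y - y / 2 : ℝ) : EReal) ≤ y := by
  refine EReal.sub_le_of_le_add ?_
  rw [← EReal.coe_add, add_comm y]
  refine PhiInvE_le_coe (add_pos_of_nonneg_of_pos hc0 (mul_pos (exp_pos k) (Phi_pos _))) ?_
  rw [CBS_of_pos hy] at hc
  linarith

theorem stmt_9 (k c : ℝ) (hc : max (1 - Real.exp k) 0 ≤ c) (hc1 : c < 1) :
    ((YBS k c : ℝ) : EReal) =
      ⨅ d : ℝ, (PhiInvE (c + Real.exp k * Phi d) - (d : EReal)) ∧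
    (max (1 - Real.exp k) 0 < c →
      ((YBS k c : ℝ) : EReal) =
        PhiInvE (c + Real.exp k * Phi (-k / YBS k c - YBS k c / 2)) -
          ((-k / YBS k c - YBS k c / 2 : ℝ) : EReal)) := by
  have hc0 : 0 ≤ c := (le_max_right _ _).trans hc
  obtain ⟨y, hy, rfl⟩ := exists_CBS_eq hc hc1
  rw [YBS_eq_of_CBS_eq hy rfl]
  refine ⟨le_antisymm (le_iInf (coe_le_PhiInvE_CBS_add_sub hy)) ?_, fun hlt => ?_⟩
  · refine EReal.le_of_forall_lt_iff_le.1 fun z hz => ?_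
    have hyz : y < z := EReal.coe_lt_coe_iff.1 hz
    exact (iInf_le _ _).trans (PhiInvE_add_sub_le (hy.trans_lt hyz) hc0
      (((strictMonoOn_CBS k).le_iff_le hy (hy.trans hyz.le)).2 hyz.le))
  · have hy0 : 0 < y := hy.lt_of_ne (by rintro rfl; exact hlt.ne' (CBS_zero k))
    exact le_antisymm (coe_le_PhiInvE_CBS_add_sub hy _) (PhiInvE_add_sub_le hy0 hc0 le_rfl)
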